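/- Let f be a real polynomial with all roots real and nonzero. Then the number of positive roots of f (counted with multiplicity) equals the number of sign changes in the sequence of nonzero coefficients of f, i.e. p_+ = ∑_{(r,s)∈Λ} (1 - sgn(a_r a_s))/2, where Λ is the set of consecutive pairs of indices of nonzero coefficients. -/

import Mathlib

open Polynomial

/-- Sign of a real number as an integer. -/
noncomputable def sgn (t : ℝ) : ℤ := if 0 < t then 1 else if t < 0 then -1 else 0

lemma sgn_zero : sgn 0 = 0 := by simp [sgn]
lemma sgn_of_pos {a : ℝ} (h : 0 < a) : sgn a = 1 := by simp [sgn, h]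
lemma sgn_of_neg {a : ℝ} (h : a < 0) : sgn a = -1 := by
  simp [sgn, h, not_lt_of_gt h, asymm h]
lemma sgn_eq_zero_iff {a : ℝ} : sgn a = 0 ↔ a = 0 := by
  rcases lt_trichotomy a 0 with h | h | h
  · simp [sgn_of_neg h, h.ne]
  · simp [h, sgn_zero]
  · simp [sgn_of_pos h, h.ne']
lemma sgn_trichotomy (a : ℝ) : (a = 0 ∧ sgn a = 0) ∨ (0 < a ∧ sgn a = 1) ∨ (a < 0 ∧ sgn a = -1) := by
  rcases lt_trichotomy a 0 with h | h | h
  · exact Or.inr (Or.inr ⟨h, sgn_of_neg h⟩)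
  · exact Or.inl ⟨h, by simp [h, sgn_zero]⟩
  · exact Or.inr (Or.inl ⟨h, sgn_of_pos h⟩)
lemma sgn_neg (a : ℝ) : sgn (-a) = -sgn a := by
  rcases sgn_trichotomy a with ⟨h, hs⟩ | ⟨h, hs⟩ | ⟨h, hs⟩
  · simp [h, hs, sgn_zero]
  · rw [hs, sgn_of_neg (by linarith)]
  · rw [hs, sgn_of_pos (by linarith)]; rfl
lemma sgn_ne_zero {a : ℝ} (h : a ≠ 0) : sgn a ≠ 0 := fun hh => h (sgn_eq_zero_iff.mp hh)

/-- first sign of a list -/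
noncomputable def fsl : List ℝ → ℤ
  | [] => 0
  | a :: t => if a = 0 then fsl t else sgn a

/-- sign variation count of a list -/
noncomputable def Vl : List ℝ → ℕ
  | [] => 0
  | a :: t => (if a ≠ 0 ∧ fsl t = -sgn a then 1 else 0) + Vl t

lemma fsl_nil : fsl [] = 0 := rfl
lemma fsl_cons (a t) : fsl (a :: t) = if a = 0 then fsl t else sgn a := rfl
lemma Vl_nil : Vl [] = 0 := rfl
lemma Vl_cons (a t) : Vl (a :: t) = (if a ≠ 0 ∧ fsl t = -sgn a then 1 else 0) + Vl t := rfl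
lemma Vl_cons_le (a t) : Vl t ≤ Vl (a :: t) := by rw [Vl_cons]; omega

lemma fsl_eq_zero_iff (l : List ℝ) : fsl l = 0 ↔ ∀ a ∈ l, a = 0 := by
  induction l with
  | nil => simp [fsl_nil]
  | cons a t ih =>
    by_cases h : a = 0 <;> simp [fsl_cons, h, ih, sgn_ne_zero]

lemma Vl_eq_zero_of_fsl {l : List ℝ} (h : fsl l = 0) : Vl l = 0 := by
  induction l with
  | nil => rfl
  | cons a t ih =>
    rw [fsl_eq_zero_iff] at h
    have ha : a = 0 := h a (by simp)
    have ht : fsl t = 0 := (fsl_eq_zero_iff t).mpr (fun x hx => h x (by simp [hx]))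
    simp [Vl_cons, ha, ih ht]
lemma sgn_range (a : ℝ) : sgn a = 0 ∨ sgn a = 1 ∨ sgn a = -1 := by
  rcases sgn_trichotomy a with ⟨_, h⟩ | ⟨_, h⟩ | ⟨_, h⟩ <;> simp [h]

lemma fsl_range (l : List ℝ) : fsl l = 0 ∨ fsl l = 1 ∨ fsl l = -1 := by
  induction l with
  | nil => simp [fsl_nil]
  | cons a t ih =>
    by_cases h : a = 0
    · simpa [fsl_cons, h] using ih
    · simpa [fsl_cons, h] using sgn_range a

/-- coefficients of `x + (X - c) * (poly of B)`, low-to-high -/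
noncomputable def Pm (c : ℝ) : ℝ → List ℝ → List ℝ
  | x, [] => [x]
  | x, b :: t => (x - c * b) :: Pm c b t

lemma Pm_allzero (c : ℝ) : ∀ (t : List ℝ), fsl t = 0 → ∀ x,
    fsl (Pm c x t) = sgn x ∧ Vl (Pm c x t) = 0 := by
  intro t
  induction t with
  | nil =>
    intro _ x
    constructor
    · by_cases hx : x = 0 <;> simp [Pm, fsl_cons, fsl_nil, hx, sgn_zero]
    · have := sgn_ne_zero (a := x)
      simp only [Pm, Vl_cons, Vl_nil, fsl_nil]
      split_ifs with h
      · exfalso; have := sgn_ne_zero h.1; omega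
      · show (if x ≠ 0 ∧ fsl [] = -sgn x then 1 else 0) + 0 = 0
        rw [if_neg (show ¬(x ≠ 0 ∧ fsl [] = -sgn x) from h)]
  | cons b t ih =>
    intro h x
    have hb : b = 0 := by
      by_contra hb
      simp [fsl_cons, hb] at h
      exact sgn_ne_zero hb h
    have ht : fsl t = 0 := by simpa [fsl_cons, hb] using h
    obtain ⟨h1, h2⟩ := ih ht 0
    rw [sgn_zero] at h1
    have hPm : Pm c x (b :: t) = x :: Pm c 0 t := by simp [Pm, hb]
    rw [hPm]
    constructor
    · by_cases hx : x = 0 <;> simp [fsl_cons, hx, h1, sgn_zero]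
    · simp only [Vl_cons, h1, h2]
      split_ifs with hcond
      · exfalso; have := sgn_ne_zero hcond.1; omega
      · rfl

lemma sgn_sub_of {c b x : ℝ} (hc : 0 < c) (hb : b ≠ 0) (hx : sgn x ≠ sgn b) :
    sgn (x - c * b) = -sgn b := by
  rcases sgn_trichotomy b with ⟨h, _⟩ | ⟨h, hs⟩ | ⟨h, hs⟩
  · exact absurd h hb
  · -- b > 0 : x ≤ 0
    have hcb : 0 < c * b := mul_pos hc h
    have hxle : x ≤ 0 := by
      rcases sgn_trichotomy x with ⟨h', _⟩ | ⟨h', hs'⟩ | ⟨h', _⟩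
      · exact le_of_eq h'
      · exact absurd (hs'.trans hs.symm) hx
      · exact le_of_lt h'
    rw [hs, sgn_of_neg (by linarith)]
  · have hcb : c * b < 0 := mul_neg_of_pos_of_neg hc h
    have hxge : 0 ≤ x := by
      rcases sgn_trichotomy x with ⟨h', _⟩ | ⟨h', _⟩ | ⟨h', hs'⟩
      · exact ge_of_eq h'
      · exact le_of_lt h'
      · exact absurd (hs'.trans hs.symm) hx
    rw [hs, sgn_of_pos (by linarith)]
    rfl

lemma keyP (c : ℝ) (hc : 0 < c) : ∀ B : List ℝ,
    (∀ x, Vl B ≤ Vl (Pm c x B)) ∧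
    (fsl B ≠ 0 → ∀ x, sgn x ≠ fsl B →
      Vl B + 1 ≤ Vl (Pm c x B) ∧ fsl (Pm c x B) = -fsl B) ∧
    (fsl B ≠ 0 → ∀ x,
      Vl B + 1 ≤ Vl (Pm c x B) ∨
      (Vl B ≤ Vl (Pm c x B) ∧ fsl (Pm c x B) = fsl B)) := by
  intro B
  induction B with
  | nil =>
    refine ⟨fun x => by simp [Vl_nil], fun h => absurd rfl h, fun h => absurd rfl h⟩
  | cons b t ih =>
    obtain ⟨ih3, ih1, ih2⟩ := ih
    have hPm : ∀ x, Pm c x (b :: t) = (x - c * b) :: Pm c b t := fun x => rfl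
    -- evaluations
    have hVcons : ∀ x, Vl (Pm c b t) ≤ Vl ((x - c * b) :: Pm c b t) := fun x => Vl_cons_le _ _
    refine ⟨?_, ?_, ?_⟩
    · -- K3
      intro x
      by_cases hcond : b ≠ 0 ∧ fsl t = -sgn b
      · obtain ⟨hb, hft⟩ := hcond
        have hsb := sgn_ne_zero hb
        have h1 := (ih1 (by omega) b (by omega)).1
        calc Vl (b :: t) = 1 + Vl t := by rw [Vl_cons, if_pos ⟨hb, hft⟩]
          _ ≤ Vl (Pm c b t) := by omega
          _ ≤ Vl (Pm c x (b :: t)) := by rw [hPm x]; exact Vl_cons_le _ _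
      · calc Vl (b :: t) = Vl t := by rw [Vl_cons, if_neg hcond, Nat.zero_add]
          _ ≤ Vl (Pm c b t) := ih3 b
          _ ≤ Vl (Pm c x (b :: t)) := by rw [hPm x]; exact Vl_cons_le _ _
    · -- K1
      intro hfB x hx
      by_cases hb : b = 0
      · subst hb
        have hfteq : fsl ((0:ℝ) :: t) = fsl t := by simp [fsl_cons]
        rw [hfteq] at hfB hx ⊢
        have hVB : Vl ((0:ℝ) :: t) = Vl t := by simp [Vl_cons]
        obtain ⟨hvQ, hfQ⟩ := ih1 hfB 0 (by rw [sgn_zero]; omega)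
        have hPm0 : Pm c x ((0:ℝ) :: t) = x :: Pm c 0 t := by simp [Pm]
        rw [hPm0, hVB]
        constructor
        · calc Vl t + 1 ≤ Vl (Pm c 0 t) := hvQ
            _ ≤ Vl (x :: Pm c 0 t) := Vl_cons_le _ _
        · rw [fsl_cons]
          by_cases hx0 : x = 0
          · rw [if_pos hx0]; exact hfQ
          · rw [if_neg hx0]
            have h1 := sgn_ne_zero hx0
            rcases sgn_range x with h | h | h <;> rcases fsl_range t with h' | h' | h' <;> omega
      · have hfB' : fsl (b :: t) = sgn b := by rw [fsl_cons, if_neg hb]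
        rw [hfB'] at hx ⊢
        have hsb := sgn_ne_zero hb
        have hsh : sgn (x - c * b) = -sgn b := sgn_sub_of hc hb hx
        have hhne : x - c * b ≠ 0 := by
          intro h0; rw [h0, sgn_zero] at hsh; omega
        refine ⟨?_, ?_⟩
        swap
        · rw [hPm x, fsl_cons, if_neg hhne, hsh]
        by_cases hft0 : fsl t = 0
        · obtain ⟨hfQ, hVQ⟩ := Pm_allzero c t hft0 b
          have hVB : Vl (b :: t) = Vl t := by
            rw [Vl_cons, if_neg (by intro hcc; have := hcc.2; omega), Nat.zero_add]
          have hVt : Vl t = 0 := Vl_eq_zero_of_fsl hft0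
          rw [hPm x, hVB, hVt, Vl_cons (x - c*b) (Pm c b t),
            if_pos (⟨hhne, by rw [hsh, neg_neg]; exact hfQ⟩ : _ ∧ _), hVQ]
        · by_cases hfts : fsl t = sgn b
          · have hVB : Vl (b :: t) = Vl t := by
              rw [Vl_cons, if_neg (by intro hcc; have := hcc.2; omega), Nat.zero_add]
            rw [hPm x, hVB, Vl_cons (x - c*b) (Pm c b t)]
            rcases ih2 hft0 b with hL | ⟨hR, hfQ⟩
            · exact le_trans hL (Nat.le_add_left _ _)
            · rw [if_pos ⟨hhne, by rw [hsh, neg_neg, hfQ, hfts]⟩]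
              omega
          · have hft : fsl t = -sgn b := by
              rcases fsl_range t with h | h | h <;> rcases sgn_range b with h' | h' | h' <;> omega
            have hVB : Vl (b :: t) = 1 + Vl t := by rw [Vl_cons, if_pos ⟨hb, hft⟩]
            obtain ⟨hvQ, hfQ⟩ := ih1 hft0 b (by omega)
            have hfQ' : fsl (Pm c b t) = sgn b := by omega
            rw [hPm x, hVB, Vl_cons (x - c*b) (Pm c b t),
              if_pos (⟨hhne, by rw [hsh, neg_neg]; exact hfQ'⟩ : _ ∧ _)]
            omega
    · -- K2
      intro hfB x
      by_cases hb : b = 0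
      · subst hb
        have hfteq : fsl ((0:ℝ) :: t) = fsl t := by simp [fsl_cons]
        rw [hfteq] at hfB
        have hVB : Vl ((0:ℝ) :: t) = Vl t := by simp [Vl_cons]
        obtain ⟨hvQ, _⟩ := ih1 hfB 0 (by rw [sgn_zero]; omega)
        have hPm0 : Pm c x ((0:ℝ) :: t) = x :: Pm c 0 t := by simp [Pm]
        left
        rw [hPm0, hVB]
        calc Vl t + 1 ≤ Vl (Pm c 0 t) := hvQ
          _ ≤ Vl (x :: Pm c 0 t) := Vl_cons_le _ _
      · have hfB' : fsl (b :: t) = sgn b := by rw [fsl_cons, if_neg hb]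
        have hsb := sgn_ne_zero hb
        rw [hfB', hPm x]
        by_cases hft0 : fsl t = 0
        · -- t all zero
          obtain ⟨hfQ, hVQ⟩ := Pm_allzero c t hft0 b
          have hVB : Vl (b :: t) = 0 := by
            rw [Vl_cons, if_neg (by intro hcc; have := hcc.2; omega), Nat.zero_add]
            exact Vl_eq_zero_of_fsl hft0
          by_cases hh : x - c * b = 0
          · right
            rw [fsl_cons, if_pos hh, hVB]
            exact ⟨Nat.zero_le _, hfQ⟩
          · by_cases hss : sgn (x - c * b) = sgn b
            · right
              rw [fsl_cons, if_neg hh, hVB]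
              exact ⟨Nat.zero_le _, hss⟩
            · have hss' : sgn (x - c * b) = -sgn b := by
                have := sgn_ne_zero hh
                rcases sgn_range (x - c*b) with h | h | h <;>
                  rcases sgn_range b with h' | h' | h' <;> omega
              left
              rw [hVB, Vl_cons (x - c*b) (Pm c b t),
                if_pos (⟨hh, by rw [hss', neg_neg]; exact hfQ⟩ : _ ∧ _), hVQ]
        · by_cases hfts : fsl t = sgn b
          · have hVB : Vl (b :: t) = Vl t := by
              rw [Vl_cons, if_neg (by intro hcc; have := hcc.2; omega), Nat.zero_add]
            rw [hVB]
            rcases ih2 hft0 b with hL | ⟨hR, hfQ⟩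
            · left
              exact le_trans hL (Vl_cons_le (x - c*b) _)
            · by_cases hh : x - c * b = 0
              · right
                rw [fsl_cons, if_pos hh, hfQ, hfts]
                exact ⟨le_trans hR (Vl_cons_le _ _), rfl⟩
              · by_cases hss : sgn (x - c * b) = sgn b
                · right
                  rw [fsl_cons, if_neg hh]
                  exact ⟨le_trans hR (Vl_cons_le _ _), hss⟩
                · have hss' : sgn (x - c * b) = -sgn b := by
                    have := sgn_ne_zero hh
                    rcases sgn_range (x - c*b) with h | h | h <;>
                      rcases sgn_range b with h' | h' | h' <;> omega
                  left
                  rw [Vl_cons (x - c*b) (Pm c b t),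
                    if_pos (⟨hh, by rw [hss', neg_neg, hfQ, hfts]⟩ : _ ∧ _)]
                  omega
          · have hft : fsl t = -sgn b := by
              rcases fsl_range t with h | h | h <;> rcases sgn_range b with h' | h' | h' <;> omega
            have hVB : Vl (b :: t) = 1 + Vl t := by rw [Vl_cons, if_pos ⟨hb, hft⟩]
            obtain ⟨hvQ, hfQ⟩ := ih1 hft0 b (by omega)
            have hfQ' : fsl (Pm c b t) = sgn b := by omega
            rw [hVB]
            by_cases hh : x - c * b = 0
            · right
              rw [fsl_cons, if_pos hh]
              exact ⟨le_trans (by omega) (Vl_cons_le _ _), hfQ'⟩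
            · by_cases hss : sgn (x - c * b) = sgn b
              · right
                rw [fsl_cons, if_neg hh]
                exact ⟨le_trans (by omega) (Vl_cons_le _ _), hss⟩
              · have hss' : sgn (x - c * b) = -sgn b := by
                  have := sgn_ne_zero hh
                  rcases sgn_range (x - c*b) with h | h | h <;>
                    rcases sgn_range b with h' | h' | h' <;> omega
                left
                rw [Vl_cons (x - c*b) (Pm c b t),
                  if_pos (⟨hh, by rw [hss', neg_neg]; exact hfQ'⟩ : _ ∧ _)]
                omega
lemma Pm_length (c : ℝ) : ∀ (B : List ℝ) (x : ℝ), (Pm c x B).length = B.length + 1 := by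
  intro B
  induction B with
  | nil => intro x; rfl
  | cons b t ih => intro x; simp [Pm, ih b]

lemma Pm_getD (c : ℝ) : ∀ (B : List ℝ) (x : ℝ) (i : ℕ), i ≤ B.length →
    (Pm c x B).getD i 0 = (if i = 0 then x else B.getD (i-1) 0) - c * B.getD i 0 := by
  intro B
  induction B with
  | nil =>
    intro x i hi
    have : i = 0 := by simpa using hi
    subst this
    simp [Pm]
  | cons b t ih =>
    intro x i hi
    match i with
    | 0 => simp [Pm]
    | (j+1) =>
      have hj : j ≤ t.length := by simpa using hi
      simp only [Pm, List.getD_cons_succ, ih b j hj]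
      rcases j with _ | k <;> simp

noncomputable def Lc (f : Polynomial ℝ) : List ℝ := (List.range (f.natDegree + 1)).map f.coeff

noncomputable def SV (f : Polynomial ℝ) : ℕ := Vl (Lc f)

lemma Lc_length (f : Polynomial ℝ) : (Lc f).length = f.natDegree + 1 := by simp [Lc]

lemma Lc_getD (f : Polynomial ℝ) (i : ℕ) : (Lc f).getD i 0 = f.coeff i := by
  by_cases hi : i < f.natDegree + 1
  · rw [List.getD_eq_getElem _ _ (by rw [Lc_length]; exact hi)]
    simp [Lc]
  · rw [List.getD_eq_default _ _ (by rw [Lc_length]; omega)]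
    exact (coeff_eq_zero_of_natDegree_lt (by omega)).symm

lemma Lc_ne (f : Polynomial ℝ) (hf : f ≠ 0) : fsl (Lc f) ≠ 0 := by
  intro h
  rw [fsl_eq_zero_iff] at h
  have hmem : f.coeff f.natDegree ∈ Lc f := by
    simp only [Lc, List.mem_map]
    exact ⟨f.natDegree, by simp, rfl⟩
  exact (leadingCoeff_ne_zero.mpr hf) (h _ hmem)

lemma Lc_mul (c : ℝ) (g : Polynomial ℝ) (hg : g ≠ 0) :
    Lc ((X - C c) * g) = Pm c 0 (Lc g) := by
  have hne : (X - C c) * g ≠ 0 := mul_ne_zero (X_sub_C_ne_zero c) hg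
  have hdeg : ((X - C c) * g).natDegree = g.natDegree + 1 := by
    rw [natDegree_mul (X_sub_C_ne_zero c) hg, natDegree_X_sub_C]; omega
  apply List.ext_getElem
  · rw [Lc_length, Pm_length, Lc_length, hdeg]
  · intro i h1 h2
    rw [← List.getD_eq_getElem _ 0 h1, ← List.getD_eq_getElem _ 0 h2]
    rw [Lc_length, hdeg] at h1
    rw [Lc_getD, Pm_getD c _ _ i (by rw [Lc_length]; omega), Lc_getD, Lc_getD]
    rw [sub_mul, coeff_sub, coeff_C_mul]
    congr 1
    rcases i with _ | j
    · simp [mul_coeff_zero]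
    · simp [coeff_X_mul]

lemma SV_mul {g : Polynomial ℝ} (hg : g ≠ 0) {c : ℝ} (hc : 0 < c) :
    SV g + 1 ≤ SV ((X - C c) * g) := by
  have h := ((keyP c hc (Lc g)).2.1 (Lc_ne g hg) 0 (by rw [sgn_zero]; exact fun h => Lc_ne g hg h.symm)).1
  rw [SV, SV, Lc_mul c g hg]
  exact h

lemma descartes_le : ∀ (n : ℕ) (f : Polynomial ℝ), f.natDegree = n → f ≠ 0 →
    (f.roots.filter (fun x => 0 < x)).card ≤ SV f := by
  intro n
  induction n using Nat.strong_induction_on with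
  | _ n ih =>
    intro f hn hf
    rcases Multiset.empty_or_exists_mem (f.roots.filter (fun x => 0 < x)) with he | ⟨c, hc⟩
    · rw [he]; simp
    · have hc' := Multiset.mem_filter.mp hc
      have hroot : IsRoot f c := isRoot_of_mem_roots hc'.1
      obtain ⟨g, hg⟩ := dvd_iff_isRoot.mpr hroot
      have hgne : g ≠ 0 := by rintro rfl; rw [mul_zero] at hg; exact hf hg
      have hdeg : g.natDegree < n := by
        have := natDegree_mul (X_sub_C_ne_zero c) hgne
        rw [← hg, natDegree_X_sub_C] at this
        omega
      have hroots : f.roots = c ::ₘ g.roots := by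
        rw [hg, roots_mul (by rw [← hg]; exact hf), roots_X_sub_C, Multiset.singleton_add]
      have hfilter : f.roots.filter (fun x => 0 < x) = c ::ₘ (g.roots.filter (fun x => 0 < x)) := by
        rw [hroots, Multiset.filter_cons_of_pos _ hc'.2]
      rw [hfilter, Multiset.card_cons]
      have h1 := ih _ hdeg g rfl hgne
      have h2 := SV_mul hgne hc'.2
      rw [← hg] at h2
      omega
noncomputable def altl : List ℝ → List ℝ
  | [] => []
  | a :: t => a :: (altl t).map (fun x => -x)

noncomputable def j0 : List ℝ → ℕ
  | [] => 0
  | a :: t => if a = 0 then j0 t + 1 else 0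

lemma fsl_map_neg (l : List ℝ) : fsl (l.map (fun x => -x)) = -fsl l := by
  induction l with
  | nil => simp [fsl_nil]
  | cons a t ih =>
    by_cases h : a = 0
    · simpa [fsl_cons, h] using ih
    · simp [fsl_cons, h, sgn_neg]

lemma Vl_map_neg (l : List ℝ) : Vl (l.map (fun x => -x)) = Vl l := by
  induction l with
  | nil => simp [Vl_nil]
  | cons a t ih =>
    simp only [List.map_cons, Vl_cons, fsl_map_neg, sgn_neg, ih]
    congr 1
    apply if_congr _ rfl rfl
    constructor
    · rintro ⟨h1, h2⟩; exact ⟨fun hh => h1 (by rw [hh, neg_zero]), by omega⟩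
    · rintro ⟨h1, h2⟩; exact ⟨fun hh => h1 (neg_eq_zero.mp hh), by omega⟩

lemma altl_length (l : List ℝ) : (altl l).length = l.length := by
  induction l with
  | nil => rfl
  | cons a t ih => simp [altl, ih]

lemma getD_map_neg (l : List ℝ) : ∀ i, (l.map (fun x : ℝ => -x)).getD i 0 = -(l.getD i 0) := by
  induction l with
  | nil => intro i; simp
  | cons a t ih =>
    intro i
    rcases i with _ | j
    · simp
    · rw [List.map_cons, List.getD_cons_succ, List.getD_cons_succ]; exact ih j

lemma altl_getD (l : List ℝ) : ∀ i, (altl l).getD i 0 = (-1)^i * l.getD i 0 := by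
  induction l with
  | nil => intro i; simp [altl]
  | cons a t ih =>
    intro i
    rcases i with _ | j
    · simp [altl]
    · simp only [altl, List.getD_cons_succ, getD_map_neg, ih j, pow_succ]
      ring

lemma fsl_altl (l : List ℝ) : fsl (altl l) = (-1)^(j0 l) * fsl l := by
  induction l with
  | nil => simp [altl, fsl_nil]
  | cons a t ih =>
    by_cases h : a = 0
    · have : fsl (altl (a :: t)) = -fsl (altl t) := by
        simp [altl, fsl_cons, h, fsl_map_neg]
      rw [this, ih, j0, if_pos h, fsl_cons, if_pos h, pow_succ]
      ring
    · simp [altl, fsl_cons, h, j0]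

lemma Vl_altl_zero {l : List ℝ} (h : fsl l = 0) : Vl (altl l) = 0 := by
  apply Vl_eq_zero_of_fsl
  rw [fsl_altl, h, mul_zero]

lemma gap_bound : ∀ (l : List ℝ), fsl l ≠ 0 →
    Vl l + Vl (altl l) + j0 l + 1 ≤ l.length := by
  intro l
  induction l with
  | nil => intro h; exact absurd rfl h
  | cons a t ih =>
    intro hf
    have hValt : Vl (altl (a :: t)) =
        (if a ≠ 0 ∧ fsl (altl t) = sgn a then 1 else 0) + Vl (altl t) := by
      simp only [altl, Vl_cons, fsl_map_neg, Vl_map_neg]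
      congr 1
      apply if_congr _ rfl rfl
      constructor
      · rintro ⟨h1, h2⟩; exact ⟨h1, by omega⟩
      · rintro ⟨h1, h2⟩; exact ⟨h1, by omega⟩
    by_cases h : a = 0
    · have hft : fsl t ≠ 0 := by simpa [fsl_cons, h] using hf
      have := ih hft
      have hV : Vl (a :: t) = Vl t := by simp [Vl_cons, h]
      have hj : j0 (a :: t) = j0 t + 1 := by simp [j0, h]
      rw [hV, hValt, hj]
      have hc : ¬(a ≠ 0 ∧ fsl (altl t) = sgn a) := fun hh => hh.1 h
      rw [if_neg hc, Nat.zero_add]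
      simp only [List.length_cons]
      omega
    · have hj : j0 (a :: t) = 0 := by simp [j0, h]
      have hsa := sgn_ne_zero h
      rw [hValt, hj, Vl_cons]
      by_cases hft : fsl t = 0
      · have hVt : Vl t = 0 := Vl_eq_zero_of_fsl hft
        have hValtt : Vl (altl t) = 0 := Vl_altl_zero hft
        have hfalt : fsl (altl t) = 0 := by rw [fsl_altl, hft, mul_zero]
        rw [if_neg (by intro hh; have := hh.2; omega),
            if_neg (by intro hh; have := hh.2; omega)]
        simp [hVt, hValtt]
      · have hIH := ih hft
        by_cases hc1 : fsl t = -sgn a <;> by_cases hc2 : fsl (altl t) = sgn a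
        · -- both: j0 t odd
          have hpow := fsl_altl t
          rw [hc1, hc2] at hpow
          have hodd : ¬ Even (j0 t) := by
            intro he
            rw [he.neg_one_pow] at hpow
            omega
          have hpos : 1 ≤ j0 t := by
            rcases Nat.eq_zero_or_pos (j0 t) with h0 | h0
            · exact absurd (h0 ▸ Even.zero) hodd
            · exact h0
          rw [if_pos ⟨h, hc1⟩, if_pos ⟨h, hc2⟩]
          simp only [List.length_cons]
          omega
        · rw [if_pos ⟨h, hc1⟩, if_neg (fun hh => hc2 hh.2)]
          simp only [List.length_cons]
          omega
        · rw [if_neg (fun hh => hc1 hh.2), if_pos ⟨h, hc2⟩]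
          simp only [List.length_cons]
          omega
        · rw [if_neg (fun hh => hc1 hh.2), if_neg (fun hh => hc2 hh.2)]
          simp only [List.length_cons]
          omega
lemma coeff_comp_neg (f : Polynomial ℝ) (n : ℕ) :
    (f.comp (-X)).coeff n = (-1)^n * f.coeff n := by
  induction f using Polynomial.induction_on' with
  | add p q hp hq => simp [add_comp, hp, hq, mul_add]
  | monomial k a =>
    have hC : ((-1 : Polynomial ℝ))^k = C ((-1:ℝ)^k) := by
      rw [map_pow, map_neg, map_one]
    rw [monomial_comp, neg_pow, hC]
    have hre : C a * (C ((-1:ℝ)^k) * X ^ k) = C ((-1:ℝ)^k * a) * X^k := by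
      rw [map_mul]; ring
    rw [hre, coeff_C_mul, coeff_X_pow, coeff_monomial]
    by_cases h : n = k
    · subst h; simp
    · rw [if_neg h, if_neg (Ne.symm h), mul_zero, mul_zero]

lemma comp_neg_neg (f : Polynomial ℝ) : (f.comp (-X)).comp (-X) = f := by
  rw [comp_assoc]
  simp [neg_comp, X_comp]

lemma natDegree_comp_neg (f : Polynomial ℝ) : (f.comp (-X)).natDegree = f.natDegree := by
  apply le_antisymm
  · rw [natDegree_le_iff_coeff_eq_zero]
    intro N hN
    rw [coeff_comp_neg, coeff_eq_zero_of_natDegree_lt hN, mul_zero]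
  · conv_lhs => rw [← comp_neg_neg f]
    rw [natDegree_le_iff_coeff_eq_zero]
    intro N hN
    rw [coeff_comp_neg, coeff_eq_zero_of_natDegree_lt hN, mul_zero]

lemma comp_neg_ne_zero {f : Polynomial ℝ} (hf : f ≠ 0) : f.comp (-X) ≠ 0 := by
  intro h
  apply hf
  rw [← comp_neg_neg f, h, zero_comp]

lemma Lc_comp_neg (f : Polynomial ℝ) : Lc (f.comp (-X)) = altl (Lc f) := by
  apply List.ext_getElem
  · rw [Lc_length, altl_length, Lc_length, natDegree_comp_neg]
  · intro i h1 h2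
    rw [← List.getD_eq_getElem _ 0 h1, ← List.getD_eq_getElem _ 0 h2,
      Lc_getD, altl_getD, Lc_getD, coeff_comp_neg]

lemma rootMult_comp_neg (f : Polynomial ℝ) (hf : f ≠ 0) (x : ℝ) :
    rootMultiplicity (-x) f ≤ rootMultiplicity x (f.comp (-X)) := by
  rw [Polynomial.le_rootMultiplicity_iff (comp_neg_ne_zero hf)]
  obtain ⟨u, hu⟩ := pow_rootMultiplicity_dvd f (-x)
  set m := rootMultiplicity (-x) f with hm
  refine ⟨(-1)^m * u.comp (-X), ?_⟩
  have h2 : (X - C (-x)).comp (-X) = -(X - C x) := by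
    rw [sub_comp, X_comp, C_comp, map_neg]
    ring
  calc f.comp (-X) = ((X - C (-x))^m * u).comp (-X) := by rw [← hu]
    _ = ((X - C (-x)).comp (-X))^m * u.comp (-X) := by rw [mul_comp, pow_comp]
    _ = (-(X - C x))^m * u.comp (-X) := by rw [h2]
    _ = (X - C x)^m * ((-1)^m * u.comp (-X)) := by rw [neg_pow]; ring

lemma roots_map_le (f : Polynomial ℝ) (hf : f ≠ 0) :
    f.roots.map (fun x => -x) ≤ (f.comp (-X)).roots := by
  rw [Multiset.le_iff_count]
  intro x
  have hinj : Function.Injective (fun x : ℝ => -x) := neg_injective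
  have h1 : Multiset.count x (f.roots.map (fun x => -x)) = Multiset.count (-x) f.roots := by
    conv_lhs => rw [show x = (fun y : ℝ => -y) (-x) by simp]
    exact Multiset.count_map_eq_count' _ _ hinj _
  rw [h1, count_roots, count_roots]
  exact rootMult_comp_neg f hf x

lemma card_filter_neg_map (s : Multiset ℝ) :
    (s.filter (fun x => x < 0)).card = ((s.map (fun x => -x)).filter (fun x => 0 < x)).card := by
  induction s using Multiset.induction_on with
  | empty => simp
  | cons a s ih =>
    rw [Multiset.map_cons, Multiset.filter_cons, Multiset.filter_cons]
    by_cases h : a < 0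
    · rw [if_pos h, if_pos (show (0:ℝ) < -a by simpa using h)]
      simp [ih]
    · rw [if_neg h, if_neg (show ¬ (0:ℝ) < -a by simpa using h)]
      simp [ih]

lemma neg_roots_le (f : Polynomial ℝ) (hf : f ≠ 0) :
    (f.roots.filter (fun x => x < 0)).card ≤ ((f.comp (-X)).roots.filter (fun x => 0 < x)).card := by
  rw [card_filter_neg_map]
  exact Multiset.card_le_card (Multiset.filter_le_filter _ (roots_map_le f hf))
lemma fsl_ne_of_getD {t : List ℝ} {i : ℕ} (h : t.getD i 0 ≠ 0) : fsl t ≠ 0 := by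
  intro hf
  apply h
  rw [fsl_eq_zero_iff] at hf
  by_cases hi : i < t.length
  · rw [List.getD_eq_getElem _ _ hi]
    exact hf _ (List.getElem_mem hi)
  · rw [List.getD_eq_default _ _ (by omega)]

lemma j0_spec : ∀ (t : List ℝ), fsl t ≠ 0 →
    sgn (t.getD (j0 t) 0) = fsl t ∧ j0 t < t.length := by
  intro t
  induction t with
  | nil => intro h; exact absurd rfl h
  | cons b t ih =>
    intro h
    by_cases hb : b = 0
    · have hft : fsl t ≠ 0 := by simpa [fsl_cons, hb] using h
      obtain ⟨h1, h2⟩ := ih hft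
      refine ⟨?_, ?_⟩
      · rw [j0, if_pos hb, List.getD_cons_succ, h1, fsl_cons, if_pos hb]
      · rw [j0, if_pos hb]
        simpa using h2
    · refine ⟨?_, ?_⟩
      · rw [j0, if_neg hb, List.getD_cons_zero, fsl_cons, if_neg hb]
      · rw [j0, if_neg hb]; simp

lemma j0_zeros : ∀ (t : List ℝ) (i : ℕ), i < j0 t → t.getD i 0 = 0 := by
  intro t
  induction t with
  | nil => intro i h; simp
  | cons b t ih =>
    intro i hi
    by_cases hb : b = 0
    · rw [j0, if_pos hb] at hi
      rcases i with _ | k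
      · simpa using hb
      · rw [List.getD_cons_succ]
        exact ih k (by omega)
    · rw [j0, if_neg hb] at hi
      omega

lemma j0_unique {t : List ℝ} {s : ℕ} (h : t.getD s 0 ≠ 0)
    (hz : ∀ i < s, t.getD i 0 = 0) : s = j0 t := by
  have hft := fsl_ne_of_getD h
  obtain ⟨h1, _⟩ := j0_spec t hft
  have hj0ne : t.getD (j0 t) 0 ≠ 0 := by
    intro hh; rw [hh, sgn_zero] at h1; exact hft h1.symm
  rcases lt_trichotomy s (j0 t) with hlt | he | hgt
  · exact absurd (j0_zeros t s hlt) h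
  · exact he
  · exact absurd (hz _ hgt) hj0ne

lemma mul_neg_iff_sgn {a b : ℝ} (ha : a ≠ 0) (hb : b ≠ 0) :
    (a * b < 0 ↔ sgn b = -sgn a) := by
  rcases sgn_trichotomy a with ⟨h, hs⟩ | ⟨h, hs⟩ | ⟨h, hs⟩
  · exact absurd h ha
  · rcases sgn_trichotomy b with ⟨h', hs'⟩ | ⟨h', hs'⟩ | ⟨h', hs'⟩
    · exact absurd h' hb
    · constructor
      · intro hh; nlinarith
      · intro hh; rw [hs, hs'] at hh; omega
    · constructor
      · intro _; rw [hs, hs']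
      · intro _; exact mul_neg_of_pos_of_neg h h'
  · rcases sgn_trichotomy b with ⟨h', hs'⟩ | ⟨h', hs'⟩ | ⟨h', hs'⟩
    · exact absurd h' hb
    · constructor
      · intro _; rw [hs, hs']; rfl
      · intro _; exact mul_neg_of_neg_of_pos h h'
    · constructor
      · intro hh; nlinarith
      · intro hh; rw [hs, hs'] at hh; omega

noncomputable def Lam (l : List ℝ) : Finset (ℕ × ℕ) :=
  (Finset.range l.length ×ˢ Finset.range l.length).filter
    (fun p => p.1 < p.2 ∧ l.getD p.1 0 ≠ 0 ∧ l.getD p.2 0 ≠ 0 ∧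
      (∀ i ∈ Finset.Ioo p.1 p.2, l.getD i 0 = 0))

def embS : ℕ × ℕ ↪ ℕ × ℕ :=
  ⟨fun p => (p.1 + 1, p.2 + 1), fun p q h => by
    have h1 : p.1 + 1 = q.1 + 1 := congrArg Prod.fst h
    have h2 : p.2 + 1 = q.2 + 1 := congrArg Prod.snd h
    exact Prod.ext_iff.mpr ⟨by omega, by omega⟩⟩

lemma mem_Lam_succ (a : ℝ) (t : List ℝ) (r s : ℕ) :
    (r + 1, s + 1) ∈ Lam (a :: t) ↔ (r, s) ∈ Lam t := by
  simp only [Lam, Finset.mem_filter, Finset.mem_product, Finset.mem_range, List.length_cons,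
    Finset.mem_Ioo, List.getD_cons_succ]
  constructor
  · rintro ⟨⟨hr, hs⟩, hrs, h1, h2, h3⟩
    refine ⟨⟨by omega, by omega⟩, by omega, h1, h2, ?_⟩
    intro i hi
    have := h3 (i + 1) ⟨by omega, by omega⟩
    simpa using this
  · rintro ⟨⟨hr, hs⟩, hrs, h1, h2, h3⟩
    refine ⟨⟨by omega, by omega⟩, by omega, h1, h2, ?_⟩
    intro i hi
    rcases i with _ | k
    · omega
    · rw [List.getD_cons_succ]
      exact h3 k (by omega)

lemma mem_Lam_zero (a : ℝ) (t : List ℝ) (s : ℕ) :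
    ((0, s) ∈ Lam (a :: t)) ↔ (a ≠ 0 ∧ fsl t ≠ 0 ∧ s = j0 t + 1) := by
  simp only [Lam, Finset.mem_filter, Finset.mem_product, Finset.mem_range, List.length_cons,
    Finset.mem_Ioo]
  constructor
  · rintro ⟨⟨hr, hs⟩, hrs, h1, h2, h3⟩
    have ha : a ≠ 0 := by simpa using h1
    rcases s with _ | s'
    · omega
    have hgs : t.getD s' 0 ≠ 0 := by simpa [List.getD_cons_succ] using h2
    have hzer : ∀ i < s', t.getD i 0 = 0 := by
      intro i hi
      have := h3 (i + 1) ⟨by omega, by omega⟩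
      simpa using this
    exact ⟨ha, fsl_ne_of_getD hgs, by rw [j0_unique hgs hzer]⟩
  · rintro ⟨ha, hft, hseq⟩
    obtain ⟨h1, h2⟩ := j0_spec t hft
    have hj0ne : t.getD (j0 t) 0 ≠ 0 := by
      intro hh; rw [hh, sgn_zero] at h1; exact hft h1.symm
    subst hseq
    refine ⟨⟨by omega, by omega⟩, by omega, by simpa using ha, by simpa using hj0ne, ?_⟩
    intro i hi
    rcases i with _ | k
    · omega
    · rw [List.getD_cons_succ]
      exact j0_zeros t k (by omega)

lemma Lam_cons_pos {a : ℝ} {t : List ℝ} (ha : a ≠ 0) (hft : fsl t ≠ 0) :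
    Lam (a :: t) = insert (0, j0 t + 1) ((Lam t).map embS) := by
  ext ⟨r, s⟩
  rw [Finset.mem_insert, Finset.mem_map]
  constructor
  · intro h
    rcases r with _ | r'
    · left
      obtain ⟨_, _, hs⟩ := (mem_Lam_zero a t s).mp h
      rw [hs]
    · rcases s with _ | s'
      · exfalso
        have := (Finset.mem_filter.mp h).2.1
        omega
      · right
        exact ⟨(r', s'), (mem_Lam_succ a t r' s').mp h, rfl⟩
  · rintro (h | ⟨⟨r', s'⟩, hmem, heq⟩)
    · rw [Prod.mk.injEq] at h
      rw [h.1, h.2]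
      exact (mem_Lam_zero a t _).mpr ⟨ha, hft, rfl⟩
    · have : (r, s) = (r' + 1, s' + 1) := heq.symm
      rw [this]
      exact (mem_Lam_succ a t r' s').mpr hmem

lemma Lam_cons_neg {a : ℝ} {t : List ℝ} (h : a = 0 ∨ fsl t = 0) :
    Lam (a :: t) = (Lam t).map embS := by
  ext ⟨r, s⟩
  rw [Finset.mem_map]
  constructor
  · intro hm
    rcases r with _ | r'
    · exfalso
      obtain ⟨h1, h2, _⟩ := (mem_Lam_zero a t s).mp hm
      rcases h with h | h
      · exact h1 h
      · exact h2 h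
    · rcases s with _ | s'
      · exfalso
        have := (Finset.mem_filter.mp hm).2.1
        omega
      · exact ⟨(r', s'), (mem_Lam_succ a t r' s').mp hm, rfl⟩
  · rintro ⟨⟨r', s'⟩, hmem, heq⟩
    have : (r, s) = (r' + 1, s' + 1) := heq.symm
    rw [this]
    exact (mem_Lam_succ a t r' s').mpr hmem
lemma bridge : ∀ (l : List ℝ),
    ∑ p ∈ Lam l, (if l.getD p.1 0 * l.getD p.2 0 < 0 then (1:ℤ) else 0) = (Vl l : ℤ) := by
  intro l
  induction l with
  | nil =>
    have h : Lam ([] : List ℝ) = ∅ := by unfold Lam; simp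
    rw [h]
    simp [Vl_nil]
  | cons a t ih =>
    have hmap : ∑ p ∈ (Lam t).map embS,
        (if (a :: t).getD p.1 0 * (a :: t).getD p.2 0 < 0 then (1:ℤ) else 0)
        = (Vl t : ℤ) := by
      rw [Finset.sum_map, ← ih]
      apply Finset.sum_congr rfl
      intro p _
      show (if (a :: t).getD (p.1+1) 0 * (a :: t).getD (p.2+1) 0 < 0 then (1:ℤ) else 0) = _
      rw [List.getD_cons_succ, List.getD_cons_succ]
    by_cases hcond : a ≠ 0 ∧ fsl t ≠ 0
    · obtain ⟨ha, hft⟩ := hcond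
      have hnotin : (0, j0 t + 1) ∉ (Lam t).map embS := by
        rw [Finset.mem_map]
        rintro ⟨p, _, hp⟩
        have : p.1 + 1 = 0 := congrArg Prod.fst hp
        omega
      rw [Lam_cons_pos ha hft, Finset.sum_insert hnotin, hmap]
      obtain ⟨hsg, _⟩ := j0_spec t hft
      have hj0ne : t.getD (j0 t) 0 ≠ 0 := by
        intro hh; rw [hh, sgn_zero] at hsg; exact hft hsg.symm
      have hterm : (a :: t).getD 0 0 * (a :: t).getD (j0 t + 1) 0 < 0 ↔ fsl t = -sgn a := by
        rw [List.getD_cons_zero, List.getD_cons_succ, mul_neg_iff_sgn ha hj0ne, hsg]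
      rw [Vl_cons]
      push_cast
      have : (if a ≠ 0 ∧ fsl t = -sgn a then (1:ℤ) else 0)
          = if (a :: t).getD 0 0 * (a :: t).getD (j0 t + 1) 0 < 0 then (1:ℤ) else 0 := by
        rw [if_congr (Iff.intro (fun h => hterm.mpr h.2) (fun h => ⟨ha, hterm.mp h⟩)) rfl rfl]
      rw [this]
    · have h' : a = 0 ∨ fsl t = 0 := by tauto
      rw [Lam_cons_neg h', hmap, Vl_cons]
      have hc : ¬(a ≠ 0 ∧ fsl t = -sgn a) := by
        rintro ⟨h1, h2⟩
        rcases h' with h | h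
        · exact h1 h
        · rw [h] at h2
          exact sgn_ne_zero h1 (by omega)
      rw [if_neg hc]
      push_cast
      ring

lemma term_eq {a b : ℝ} (ha : a ≠ 0) (hb : b ≠ 0) :
    (1 - sgn (a * b)) / 2 = if a * b < 0 then (1:ℤ) else 0 := by
  rcases sgn_trichotomy (a * b) with ⟨h, hs⟩ | ⟨h, hs⟩ | ⟨h, hs⟩
  · exact absurd h (mul_ne_zero ha hb)
  · rw [hs, if_neg (not_lt.mpr h.le)]
    decide
  · rw [hs, if_pos h]
    decide

/-- Descartes' rule for a real polynomial with all roots real and nonzero: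
the number of positive roots (with multiplicity) equals the number of sign changes
in the sequence of nonzero coefficients, `p₊ = ∑_{(r,s)∈Λ} (1 - sgn (a_r a_s))/2`. -/
theorem stmt4 (f : Polynomial ℝ) (hf : f ≠ 0) (h0 : f.coeff 0 ≠ 0)
    (hsplit : (f.roots.card : ℕ) = f.natDegree) :
    ((f.roots.filter fun x => 0 < x).card : ℤ) =
    ∑ p ∈ ((Finset.range (f.natDegree + 1)) ×ˢ (Finset.range (f.natDegree + 1))).filter
        (fun p => p.1 < p.2 ∧ f.coeff p.1 ≠ 0 ∧ f.coeff p.2 ≠ 0 ∧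
          (∀ i ∈ Finset.Ioo p.1 p.2, f.coeff i = 0)),
      (1 - sgn (f.coeff p.1 * f.coeff p.2)) / 2 := by
  have hg : f.comp (-X) ≠ 0 := comp_neg_ne_zero hf
  -- upper bound on total sign variation
  have h0' : (Lc f).getD 0 0 ≠ 0 := by rw [Lc_getD]; exact h0
  have hj0 : (0:ℕ) = j0 (Lc f) := j0_unique h0' (fun i hi => absurd hi (Nat.not_lt_zero i))
  have hub := gap_bound (Lc f) (Lc_ne f hf)
  rw [← hj0, Lc_length] at hub
  have hub' : SV f + SV (f.comp (-X)) + 1 ≤ f.natDegree + 1 := by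
    rw [SV, SV, Lc_comp_neg]
    omega
  -- Descartes inequalities
  have hd1 := descartes_le _ f rfl hf
  have hd2 := descartes_le _ (f.comp (-X)) rfl hg
  have hneg := neg_roots_le f hf
  -- 0 is not a root
  have h0nr : (0:ℝ) ∉ f.roots := by
    intro hmem
    have := isRoot_of_mem_roots hmem
    rw [IsRoot, ← coeff_zero_eq_eval_zero] at this
    exact h0 this
  -- positive + negative = all
  have hsum : (f.roots.filter (fun x => 0 < x)).card
      + (f.roots.filter (fun x => x < 0)).card = f.natDegree := by
    have hfa := Multiset.filter_add_not (fun x => 0 < x) f.roots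
    have hcg : f.roots.filter (fun x => ¬ 0 < x) = f.roots.filter (fun x => x < 0) := by
      apply Multiset.filter_congr
      intro x hx
      have hxne : x ≠ 0 := fun hh => h0nr (hh ▸ hx)
      constructor
      · intro hh; exact lt_of_le_of_ne (not_lt.mp hh) hxne
      · intro hh; exact not_lt.mpr hh.le
    rw [hcg] at hfa
    have := congrArg Multiset.card hfa
    rw [Multiset.card_add] at this
    rw [this, hsplit]
  have hpeq : (f.roots.filter (fun x => 0 < x)).card = SV f := by
    have := le_antisymm hd1 (by omega)
    exact this
  -- identify the RHS finset with Lam (Lc f)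
  have hLam : ((Finset.range (f.natDegree + 1)) ×ˢ (Finset.range (f.natDegree + 1))).filter
        (fun p => p.1 < p.2 ∧ f.coeff p.1 ≠ 0 ∧ f.coeff p.2 ≠ 0 ∧
          (∀ i ∈ Finset.Ioo p.1 p.2, f.coeff i = 0)) = Lam (Lc f) := by
    unfold Lam
    ext p
    simp only [Finset.mem_filter, Finset.mem_product, Finset.mem_range, Lc_length, Lc_getD]
  rw [hLam]
  have hterms : ∑ p ∈ Lam (Lc f), (1 - sgn (f.coeff p.1 * f.coeff p.2)) / 2
      = ∑ p ∈ Lam (Lc f),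
        (if (Lc f).getD p.1 0 * (Lc f).getD p.2 0 < 0 then (1:ℤ) else 0) := by
    apply Finset.sum_congr rfl
    intro p hp
    obtain ⟨-, -, h1, h2, -⟩ := Finset.mem_filter.mp hp
    rw [Lc_getD] at h1 h2
    rw [Lc_getD, Lc_getD]
    exact term_eq h1 h2
  rw [hterms, bridge, hpeq]
  rfl
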